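/- arXiv:1702.02809 — 2 statements merged into one kernel-verified Lean document; each statement's English description precedes it below -/
import Mathlib

section
/- Let |S| = n, let k ≤ n, and let Q_0 = ∅, Q_1, …, Q_k be a greedy sequence for the total utility U of length k (part of a greedy sequence that, continued for n steps, exhausts S). Then for every subset OPT ⊆ S, U(Q_k) ≥ (k/n) · U(OPT); i.e., the greedy algorithm achieves approximation ratio k/n for TOPS. -/
/-!
Total utility is a sum of maxima, hence monotone and submodular (diminishing returns). For a
greedy sequence, submodularity together with the greedy choice makes the marginal gains
`U(Q_{θ+1}) - U(Q_θ)` nonincreasing, so `θ ↦ U(Q_θ)` is a concave sequence starting at `0`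
and `U(Q_k) ≥ (k/n) U(Q_n)`. Since `Q_n = S`, monotonicity gives `U(Q_n) ≥ U(OPT)`.
-/

open Finset

/-- Utility of a single trajectory with preference function `ψ` over a set of sites `Q`:
the maximum preference score over `Q`, with value `0` on the empty set. -/
noncomputable def trajU {S : Type*} (ψ : S → ℝ) (Q : Finset S) : ℝ :=
  if h : Q.Nonempty then Q.sup' h ψ else 0

noncomputable def totalU {T S : Type*} [Fintype T] (ψ : T → S → ℝ) (Q : Finset S) : ℝ :=
  ∑ j, trajU (ψ j) Q

def IsGreedySeq {S : Type*} [DecidableEq S] (f : Finset S → ℝ)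
    (Q : ℕ → Finset S) (k : ℕ) : Prop :=
  Q 0 = ∅ ∧ ∀ θ, 1 ≤ θ → θ ≤ k →
    (∃ s, s ∉ Q (θ - 1) ∧ Q θ = insert s (Q (θ - 1))) ∧
    ∀ s : S, f (insert s (Q (θ - 1))) ≤ f (Q θ)

def HasDiminishingReturns {S : Type*} [DecidableEq S] (f : Finset S → ℝ) : Prop :=
  ∀ ⦃A B : Finset S⦄, A ⊆ B → ∀ s, f (insert s B) - f B ≤ f (insert s A) - f A

lemma HasDiminishingReturns.sum {ι S : Type*} [DecidableEq S] {f : ι → Finset S → ℝ}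
    (hf : ∀ j, HasDiminishingReturns (f j)) (t : Finset ι) :
    HasDiminishingReturns fun Q ↦ ∑ j ∈ t, f j Q := by
  intro A B hAB s
  simp only [← sum_sub_distrib]
  exact sum_le_sum fun j _ ↦ hf j hAB s

section trajU

variable {S : Type*} {ψ : S → ℝ}

@[simp]
lemma trajU_empty (ψ : S → ℝ) : trajU ψ ∅ = 0 := by
  simp [trajU]

lemma trajU_nonneg (hψ : ∀ s, 0 ≤ ψ s) (Q : Finset S) : 0 ≤ trajU ψ Q := by
  unfold trajU
  split_ifs with h
  · obtain ⟨s, hs⟩ := h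
    exact (hψ s).trans (le_sup' ψ hs)
  · rfl

lemma trajU_mono (hψ : ∀ s, 0 ≤ ψ s) : Monotone (trajU ψ) := by
  intro A B hAB
  rcases A.eq_empty_or_nonempty with rfl | hA
  · simpa using trajU_nonneg hψ B
  · rw [trajU, trajU, dif_pos hA, dif_pos (hA.mono hAB)]
    exact sup'_mono ψ hAB hA

lemma trajU_insert [DecidableEq S] (hψ : ∀ s, 0 ≤ ψ s) (s : S) (A : Finset S) :
    trajU ψ (insert s A) = max (ψ s) (trajU ψ A) := by
  rcases A.eq_empty_or_nonempty with rfl | hA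
  · simp [trajU, hψ s]
  · rw [trajU, trajU, dif_pos hA, dif_pos (insert_nonempty s A), sup'_insert]

lemma trajU_hasDiminishingReturns [DecidableEq S] (hψ : ∀ s, 0 ≤ ψ s) :
    HasDiminishingReturns (trajU ψ) := by
  intro A B hAB s
  rw [trajU_insert hψ, trajU_insert hψ]
  have hle := trajU_mono hψ hAB
  rcases le_total (ψ s) (trajU ψ B) with h | h
  · linarith [max_eq_right h, le_max_right (ψ s) (trajU ψ A)]
  · rw [max_eq_left h, max_eq_left (hle.trans h)]
    linarith

end trajU

section totalU

variable {T S : Type*} [Fintype T] {ψ : T → S → ℝ}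

@[simp]
lemma totalU_empty (ψ : T → S → ℝ) : totalU ψ ∅ = 0 := by
  simp [totalU]

lemma totalU_mono (hψ : ∀ j s, 0 ≤ ψ j s) : Monotone (totalU ψ) :=
  fun _ _ hAB ↦ sum_le_sum fun j _ ↦ trajU_mono (hψ j) hAB

lemma totalU_hasDiminishingReturns [DecidableEq S] (hψ : ∀ j s, 0 ≤ ψ j s) :
    HasDiminishingReturns (totalU ψ) :=
  HasDiminishingReturns.sum (fun j ↦ trajU_hasDiminishingReturns (hψ j)) univ

end totalU

namespace IsGreedySeq

variable {S : Type*} [DecidableEq S] {f : Finset S → ℝ} {Q : ℕ → Finset S} {k i : ℕ}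

lemma exists_eq_insert (h : IsGreedySeq f Q k) (hi : i < k) :
    ∃ s, Q (i + 1) = insert s (Q i) := by
  obtain ⟨s, -, hs⟩ := (h.2 (i + 1) (by omega) hi).1
  exact ⟨s, hs⟩

lemma apply_insert_le (h : IsGreedySeq f Q k) (hi : i < k) (s : S) :
    f (insert s (Q i)) ≤ f (Q (i + 1)) :=
  (h.2 (i + 1) (by omega) hi).2 s

/-- The greedy choice at step `i` beats the element chosen at step `i + 1`, whose gain could
only shrink from `Q i` to the larger `Q (i + 1)`. -/
lemma antitoneOn_gain (h : IsGreedySeq f Q k) (hf : HasDiminishingReturns f) :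
    AntitoneOn (fun i ↦ f (Q (i + 1)) - f (Q i)) (Set.Iio k) := by
  refine antitoneOn_of_add_one_le inferInstance fun i _ hi hi₁ ↦ ?_
  obtain ⟨s, hs⟩ := h.exists_eq_insert hi₁
  obtain ⟨t, ht⟩ := h.exists_eq_insert hi
  calc f (Q (i + 1 + 1)) - f (Q (i + 1))
      = f (insert s (Q (i + 1))) - f (Q (i + 1)) := by rw [hs]
    _ ≤ f (insert s (Q i)) - f (Q i) := hf (ht ▸ subset_insert t (Q i)) s
    _ ≤ f (Q (i + 1)) - f (Q i) := sub_le_sub_right (h.apply_insert_le hi s) _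

end IsGreedySeq

/-- Each of the first `k` increments is at least the `k`-th one, and each later one at most. -/
lemma mul_sub_le_mul_sub_of_antitoneOn {a : ℕ → ℝ} {n k : ℕ}
    (ha : AntitoneOn (fun i ↦ a (i + 1) - a i) (Set.Iio n)) (hk : k ≤ n) :
    k * (a n - a 0) ≤ n * (a k - a 0) := by
  rcases hk.eq_or_lt with rfl | hkn
  · rfl
  set d := a (k + 1) - a k
  have hhead : k * d ≤ a k - a 0 := by
    have h := card_nsmul_le_sum (range k) (fun i ↦ a (i + 1) - a i) d fun i hi ↦
      ha ((mem_range.mp hi).trans hkn) hkn (mem_range.mp hi).le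
    rwa [sum_range_sub, card_range, nsmul_eq_mul] at h
  have htail : a n - a k ≤ (n - k : ℕ) * d := by
    have h := sum_le_card_nsmul (Ico k n) (fun i ↦ a (i + 1) - a i) d fun i hi ↦
      ha hkn (mem_Ico.mp hi).2 (mem_Ico.mp hi).1
    rwa [sum_Ico_sub a hk, Nat.card_Ico, nsmul_eq_mul] at h
  rw [Nat.cast_sub hk] at htail
  have hk0 : (0 : ℝ) ≤ k := k.cast_nonneg
  have hnk : (0 : ℝ) ≤ n - k := sub_nonneg.mpr (by exact_mod_cast hk)
  nlinarith [mul_le_mul_of_nonneg_left htail hk0, mul_le_mul_of_nonneg_left hhead hnk]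

lemma div_mul_sub_le_sub_of_antitoneOn {a : ℕ → ℝ} {n k : ℕ}
    (ha : AntitoneOn (fun i ↦ a (i + 1) - a i) (Set.Iio n)) (hk : k ≤ n) :
    (k / n : ℝ) * (a n - a 0) ≤ a k - a 0 := by
  rcases n.eq_zero_or_pos with rfl | hn
  · simp [Nat.le_zero.mp hk]
  rw [div_mul_eq_mul_div, div_le_iff₀ (by exact_mod_cast hn), mul_comm _ (n : ℝ)]
  exact mul_sub_le_mul_sub_of_antitoneOn ha hk

theorem greedy_kn_approx_general {T S : Type*} [Fintype T] [Fintype S] [DecidableEq S]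
    (ψ : T → S → ℝ) (hψ : ∀ j s, 0 ≤ ψ j s ∧ ψ j s ≤ 1)
    (n k : ℕ) (hk : k ≤ n)
    (Q : ℕ → Finset S) (hgreedy : IsGreedySeq (totalU ψ) Q n)
    (hQn : Q n = Finset.univ) :
    ∀ OPT : Finset S, ((k : ℝ) / (n : ℝ)) * totalU ψ OPT ≤ totalU ψ (Q k) := by
  intro OPT
  have hψ₀ : ∀ j s, 0 ≤ ψ j s := fun j s ↦ (hψ j s).1
  have hconcave := div_mul_sub_le_sub_of_antitoneOn (a := fun i ↦ totalU ψ (Q i))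
    (hgreedy.antitoneOn_gain (totalU_hasDiminishingReturns hψ₀)) hk
  rw [hgreedy.1, totalU_empty, sub_zero, sub_zero] at hconcave
  calc (k / n : ℝ) * totalU ψ OPT ≤ (k / n : ℝ) * totalU ψ (Q n) := by
        gcongr
        exact totalU_mono hψ₀ (hQn ▸ subset_univ OPT)
    _ ≤ totalU ψ (Q k) := hconcave

/-- the greedy algorithm achieves approximation ratio `k/n` for TOPS: if `Q`
is a greedy sequence for the total utility `U` that, continued for `n = |S|` steps,
exhausts `S`, then for every `OPT ⊆ S`, `U(Q_k) ≥ (k/n)·U(OPT)`. -/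
theorem greedy_kn_approx {T S : Type*} [Fintype T] [Fintype S] [DecidableEq S]
    (ψ : T → S → ℝ) (hψ : ∀ j s, 0 ≤ ψ j s ∧ ψ j s ≤ 1)
    (n k : ℕ) (hn : Fintype.card S = n) (hk : k ≤ n)
    (Q : ℕ → Finset S) (hgreedy : IsGreedySeq (totalU ψ) Q n)
    (hQn : Q n = Finset.univ) :
    ∀ OPT : Finset S, ((k : ℝ) / (n : ℝ)) * totalU ψ OPT ≤ totalU ψ (Q k) :=
  greedy_kn_approx_general ψ hψ n k hk Q hgreedy hQn
end

section
/- Let τ ≥ 0, let P ⊆ V be a finite nonempty set of trajectory nodes, and let c, c', r ∈ V. If the round-trip distance estimate d_r(P, c) + d_r(c, c') + d_r(c', r) is at most τ, then d_r(P, r) ≤ τ; consequently, every trajectory in the approximate trajectory cover of a cluster representative r belongs to its exact trajectory cover. -/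
open Finset

/-- Round-trip distance between two nodes with respect to a (quasi)metric `d`. -/
def roundTrip {V : Type*} (d : V → V → ℝ) (u v : V) : ℝ := d u v + d v u

/-- Detour distance from a trajectory (a finite nonempty set of nodes `P`) to a site `s`:
the minimum over pairs `(a,b) ∈ P × P` of `d(a,s) + d(s,b) − d(a,b)`. -/
noncomputable def detour {V : Type*} (d : V → V → ℝ) (P : Finset V) (hP : P.Nonempty)
    (s : V) : ℝ :=
  (P ×ˢ P).inf' (hP.product hP) fun p => d p.1 s + d s p.2 - d p.1 p.2

/-! The detour distance is `1`-Lipschitz with respect to the round-trip distance: moving the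
site from `s` to `s'` lengthens the optimal detour through `s` by at most `d(s,s') + d(s',s)`.
Applying this along `c → c' → r` gives the theorem. -/

section Detour

variable {V : Type*} (d : V → V → ℝ) (P : Finset V) (hP : P.Nonempty)

theorem detour_le {a b : V} (ha : a ∈ P) (hb : b ∈ P) (s : V) :
    detour d P hP s ≤ d a s + d s b - d a b :=
  inf'_le (fun p : V × V => d p.1 s + d s p.2 - d p.1 p.2) (b := (a, b))
    (mem_product.2 ⟨ha, hb⟩)

theorem exists_detour_eq (s : V) :
    ∃ a ∈ P, ∃ b ∈ P, detour d P hP s = d a s + d s b - d a b := by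
  obtain ⟨⟨a, b⟩, hab, h⟩ := exists_mem_eq_inf' (hP.product hP)
    (fun p : V × V => d p.1 s + d s p.2 - d p.1 p.2)
  exact ⟨a, (mem_product.1 hab).1, b, (mem_product.1 hab).2, h⟩

theorem detour_le_detour_add_roundTrip (htri : ∀ u v w, d u w ≤ d u v + d v w) (s s' : V) :
    detour d P hP s' ≤ detour d P hP s + roundTrip d s s' := by
  obtain ⟨a, ha, b, hb, hs⟩ := exists_detour_eq d P hP s
  have h₁ := htri a s s'
  have h₂ := htri s' s b
  calc detour d P hP s' ≤ d a s' + d s' b - d a b := detour_le d P hP ha hb s'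
    _ ≤ detour d P hP s + roundTrip d s s' := by rw [hs, roundTrip]; linarith

end Detour

theorem approx_cover_subset_cover_general {V : Type*} (d : V → V → ℝ)
    (htri : ∀ u v w, d u w ≤ d u v + d v w)
    (τ : ℝ)
    (P : Finset V) (hP : P.Nonempty) (c c' r : V)
    (hest : detour d P hP c + roundTrip d c c' + roundTrip d c' r ≤ τ) :
    detour d P hP r ≤ τ :=
  calc detour d P hP r ≤ detour d P hP c' + roundTrip d c' r :=
        detour_le_detour_add_roundTrip d P hP htri c' r
    _ ≤ detour d P hP c + roundTrip d c c' + roundTrip d c' r := by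
        gcongr; exact detour_le_detour_add_roundTrip d P hP htri c c'
    _ ≤ τ := hest

/-- if the round-trip distance estimate through the cluster centers is at
most `τ`, then the true detour distance is at most `τ`; hence every trajectory in the
approximate trajectory cover of a representative `r` is in its exact trajectory cover. -/
theorem approx_cover_subset_cover {V : Type*} (d : V → V → ℝ)
    (hnonneg : ∀ u v, 0 ≤ d u v) (hrefl : ∀ u, d u u = 0)
    (htri : ∀ u v w, d u w ≤ d u v + d v w)
    (τ : ℝ) (hτ : 0 ≤ τ)
    (P : Finset V) (hP : P.Nonempty) (c c' r : V)
    (hest : detour d P hP c + roundTrip d c c' + roundTrip d c' r ≤ τ) :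
    detour d P hP r ≤ τ :=
  approx_cover_subset_cover_general d htri τ P hP c c' r hest
end
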